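/- arXiv:2005.14046 — 3 statements merged into one kernel-verified Lean document; each statement's English description precedes it below -/
import Mathlib

section
/- For real parameters a, b, c with c > b > 0 and real x with |x| < 1, the Gauss hypergeometric function satisfies the Euler integral representation: ₂F₁(a,b;c;x) = Γ(c)/(Γ(b)Γ(c−b)) · ∫₀¹ t^{b−1}(1−t)^{c−b−1}(1−tx)^{−a} dt. -/
open MeasureTheory Real

noncomputable def hyp (a b c x : ℝ) : ℝ :=
  ∑' k : ℕ, ((ascPochhammer ℝ k).eval a * (ascPochhammer ℝ k).eval b /
    ((k.factorial : ℝ) * (ascPochhammer ℝ k).eval c)) * x ^ k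

/-!
Expand `(1 - t x)^(-a)` in its binomial series `∑ (a)ₙ / n! (t x)ⁿ`, which converges
absolutely and uniformly in `t ∈ [0, 1]` because `|x| < 1`, and integrate term by term
against the beta weight `t^(b-1) (1-t)^(c-b-1)`. The `n`-th moment of this weight is
`B(b + n, c - b) = B(b, c - b) (b)ₙ / (c)ₙ`, by `Γ(s + n) = (s)ₙ Γ(s)`, and `B(b, c - b)`
is cancelled by the prefactor `Γ(c) / (Γ(b) Γ(c - b))`.
-/

open scoped Nat

theorem Ring.choose_add_natCast_sub_one_eq_ascPochhammer_div {K : Type*} [Field K] [CharZero K]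
    (a : K) (n : ℕ) : Ring.choose (a + n - 1) n = (ascPochhammer K n).eval a / n ! := by
  rw [← Ring.multichoose_eq, eq_div_iff (Nat.cast_ne_zero.2 n.factorial_ne_zero), mul_comm,
    ← nsmul_eq_mul, Ring.factorial_nsmul_multichoose_eq_ascPochhammer,
    Polynomial.ascPochhammer_smeval_eq_eval]

namespace Real

theorem mem_eball_zero_one_iff {u : ℝ} : u ∈ Metric.eball 0 1 ↔ |u| < 1 := by
  rw [← ENNReal.ofReal_one, Metric.eball_ofReal, Metric.mem_ball, dist_zero_right, norm_eq_abs]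

theorem one_sub_rpow_neg_hasFPowerSeriesOnBall_zero (a : ℝ) :
    HasFPowerSeriesOnBall (fun u ↦ (1 - u) ^ (-a))
      (.ofScalars ℝ fun n ↦ (ascPochhammer ℝ n).eval a / n !) 0 1 := by
  have h := one_div_one_sub_rpow_hasFPowerSeriesOnBall_zero a
  simp only [Ring.choose_add_natCast_sub_one_eq_ascPochhammer_div] at h
  refine h.congr fun u hu ↦ ?_
  rw [mem_eball_zero_one_iff] at hu
  rw [rpow_neg (by linarith [le_abs_self u]), inv_eq_one_div]

theorem hasSum_one_sub_rpow_neg (a : ℝ) {u : ℝ} (hu : |u| < 1) :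
    HasSum (fun n : ℕ ↦ (ascPochhammer ℝ n).eval a / n ! * u ^ n) ((1 - u) ^ (-a)) := by
  simpa [FormalMultilinearSeries.ofScalars_apply_eq, mul_comm] using
    (one_sub_rpow_neg_hasFPowerSeriesOnBall_zero a).hasSum (mem_eball_zero_one_iff.2 hu)

theorem summable_abs_ascPochhammer_div_factorial_mul_pow (a : ℝ) {r : ℝ} (hr0 : 0 ≤ r)
    (hr : r < 1) : Summable (fun n : ℕ ↦ |(ascPochhammer ℝ n).eval a / n !| * r ^ n) := by
  lift r to NNReal using hr0
  have hradius := (one_sub_rpow_neg_hasFPowerSeriesOnBall_zero a).r_le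
  simpa [FormalMultilinearSeries.ofScalars_norm, abs_div] using
    FormalMultilinearSeries.summable_norm_mul_pow _
      ((ENNReal.coe_lt_one_iff.2 hr).trans_le hradius)

theorem Gamma_add_nat_eq_ascPochhammer_mul {s : ℝ} (hs : 0 < s) (n : ℕ) :
    Gamma (s + n) = (ascPochhammer ℝ n).eval s * Gamma s := by
  induction n with
  | zero => simp
  | succ n ih =>
    rw [Nat.cast_succ, ← add_assoc, Gamma_add_one (by positivity), ih, ascPochhammer_succ_eval]
    ring

end Real

theorem Complex.betaIntegral_ofReal (u v : ℝ) :
    betaIntegral u v = ↑(∫ t in (0 : ℝ)..1, t ^ (u - 1) * (1 - t) ^ (v - 1)) := by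
  rw [betaIntegral, ← intervalIntegral.integral_ofReal]
  refine intervalIntegral.integral_congr fun t ht ↦ ?_
  rw [Set.uIcc_of_le zero_le_one] at ht
  push_cast [ofReal_cpow ht.1, ofReal_cpow (sub_nonneg.2 ht.2)]
  rfl

namespace Real

theorem integral_rpow_mul_one_sub_rpow {u v : ℝ} (hu : 0 < u) (hv : 0 < v) :
    ∫ t in (0 : ℝ)..1, t ^ (u - 1) * (1 - t) ^ (v - 1) = Gamma u * Gamma v / Gamma (u + v) := by
  have h := Complex.betaIntegral_eq_Gamma_mul_div u v (by simpa) (by simpa)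
  rw [Complex.betaIntegral_ofReal, ← Complex.ofReal_add, Complex.Gamma_ofReal,
    Complex.Gamma_ofReal, Complex.Gamma_ofReal] at h
  exact_mod_cast h

theorem intervalIntegrable_rpow_mul_one_sub_rpow {u v : ℝ} (hu : 0 < u) (hv : 0 < v) :
    IntervalIntegrable (fun t ↦ t ^ (u - 1) * (1 - t) ^ (v - 1)) volume 0 1 := by
  -- a non-integrable function has integral `0` by convention, and this integral is positive
  refine intervalIntegral.intervalIntegrable_of_integral_ne_zero ?_
  rw [integral_rpow_mul_one_sub_rpow hu hv]
  have := Gamma_pos_of_pos hu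
  have := Gamma_pos_of_pos hv
  have := Gamma_pos_of_pos (add_pos hu hv)
  positivity

theorem integral_rpow_mul_one_sub_rpow_mul_pow {u v : ℝ} (hu : 0 < u) (hv : 0 < v) (n : ℕ) :
    ∫ t in (0 : ℝ)..1, t ^ (u - 1) * (1 - t) ^ (v - 1) * t ^ n
      = Gamma u * Gamma v / Gamma (u + v) *
        ((ascPochhammer ℝ n).eval u / (ascPochhammer ℝ n).eval (u + v)) := by
  have hshift : ∫ t in (0 : ℝ)..1, t ^ (u - 1) * (1 - t) ^ (v - 1) * t ^ n
      = ∫ t in (0 : ℝ)..1, t ^ (u + n - 1) * (1 - t) ^ (v - 1) := by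
    refine intervalIntegral.integral_congr_ae (.of_forall fun t ht ↦ ?_)
    rw [Set.uIoc_of_le zero_le_one] at ht
    rw [add_sub_right_comm, rpow_add_natCast ht.1.ne']
    ring
  have := Gamma_pos_of_pos (add_pos hu hv)
  have := ascPochhammer_pos n (u + v) (add_pos hu hv)
  rw [hshift, integral_rpow_mul_one_sub_rpow (by positivity) hv, add_right_comm,
    Gamma_add_nat_eq_ascPochhammer_mul hu, Gamma_add_nat_eq_ascPochhammer_mul (add_pos hu hv)]
  field_simp

end Real

theorem hasSum_integral_mul_one_sub_mul_rpow_neg {w : ℝ → ℝ}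
    (hw : IntervalIntegrable w volume 0 1) (a : ℝ) {x : ℝ} (hx : |x| < 1) :
    HasSum
      (fun n : ℕ ↦ (ascPochhammer ℝ n).eval a / n ! * x ^ n * ∫ t in (0 : ℝ)..1, w t * t ^ n)
      (∫ t in (0 : ℝ)..1, w t * (1 - t * x) ^ (-a)) := by
  set coeff : ℕ → ℝ := fun n ↦ (ascPochhammer ℝ n).eval a / (n ! : ℝ)
  simp only [← intervalIntegral.integral_const_mul]
  refine intervalIntegral.hasSum_integral_of_dominated_convergence
    (fun n t ↦ |coeff n| * |x| ^ n * |w t|) (fun n ↦ ?_) (fun n ↦ ?_) ?_ ?_ ?_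
  · exact ((hw.mul_continuousOn (continuous_pow n).continuousOn).const_mul _).def'
      |>.aestronglyMeasurable
  · refine .of_forall fun t ht ↦ ?_
    rw [Set.uIoc_of_le zero_le_one] at ht
    have htn : |t| ^ n ≤ 1 := pow_le_one₀ (abs_nonneg t) (abs_le.2 ⟨by linarith [ht.1], ht.2⟩)
    rw [norm_eq_abs, abs_mul, abs_mul, abs_mul, abs_pow, abs_pow]
    calc |coeff n| * |x| ^ n * (|w t| * |t| ^ n)
        ≤ |coeff n| * |x| ^ n * (|w t| * 1) := by gcongr
      _ = _ := by ring
  · exact .of_forall fun t _ ↦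
      (summable_abs_ascPochhammer_div_factorial_mul_pow a (abs_nonneg x) hx).mul_right _
  · simp only [tsum_mul_right]
    exact hw.abs.const_mul _
  · refine .of_forall fun t ht ↦ ?_
    rw [Set.uIoc_of_le zero_le_one] at ht
    have htx : |t * x| < 1 := by
      rw [abs_mul, abs_of_pos ht.1]
      exact (mul_le_of_le_one_left (abs_nonneg x) ht.2).trans_lt hx
    exact ((hasSum_one_sub_rpow_neg a htx).mul_left (w t)).congr_fun fun n ↦ by ring

theorem euler_integral_repr (a b c x : ℝ) (hb : 0 < b) (hcb : b < c) (hx : |x| < 1) :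
    hyp a b c x = (Real.Gamma c / (Real.Gamma b * Real.Gamma (c - b))) *
      ∫ t in (0:ℝ)..1, t ^ (b - 1) * (1 - t) ^ (c - b - 1) * (1 - t * x) ^ (-a) := by
  have hc : 0 < c := hb.trans hcb
  have hcb' : 0 < c - b := sub_pos.2 hcb
  have hseries := (hasSum_integral_mul_one_sub_mul_rpow_neg
    (intervalIntegrable_rpow_mul_one_sub_rpow hb hcb') a hx).mul_left
      (Gamma c / (Gamma b * Gamma (c - b)))
  simp only [integral_rpow_mul_one_sub_rpow_mul_pow hb hcb', add_sub_cancel] at hseries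
  rw [← hseries.tsum_eq, hyp]
  refine tsum_congr fun n ↦ ?_
  have := Gamma_pos_of_pos hb
  have := Gamma_pos_of_pos hcb'
  have := Gamma_pos_of_pos hc
  have := ascPochhammer_pos n c hc
  field_simp
end

section
/- Let n ≥ 2 and q ∈ (1, 1 + 1/(n−1)). The function φ(ρ) = ₂F₁(−(n−1)(q−1), n/2 + q − nq; n/2; ρ) is nondecreasing on [0,1]; in particular max_{ρ∈[0,1]} φ(ρ) = φ(1). -/
open MeasureTheory Real

/-!
Let `F = ₂F₁(a, b; c; ·)` with `a b > 0`, `c > 0` and `c - a - b > 1`; for the parameters of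
`hyp_monotone`, `a, b < 0` and `c - a - b = (2q - 1)(n - 1) > 1`. The coefficients of `F` are
`O(k⁻²)`, so `F` is continuous on `[0, 1]` and twice differentiable on `[0, 1)`, where it solves
`x (1 - x) F'' + (c - (a + b + 1) x) F' = a b F`. Since `F'(0) = a b / c > 0`, suppose
`x₀ ∈ (0, 1)` is the first zero of `F'`. Then `F` increases on `[0, x₀]`, so
`F(x₀) ≥ F(0) = 1` and the equation gives `F''(x₀) > 0`, which is impossible for a function `F'`
decreasing to `0` from the left. Hence `F' > 0` on `[0, 1)`.
-/

open Filter Topology Set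

noncomputable def powSeries (a : ℕ → ℝ) (x : ℝ) : ℝ := ∑' k, a k * x ^ k

def derivCoeff (a : ℕ → ℝ) (k : ℕ) : ℝ := (k + 1) * a (k + 1)

section PowSeries

variable {a : ℕ → ℝ} {x M : ℝ}

lemma powSeries_zero : powSeries a 0 = a 0 := by
  rw [powSeries, tsum_eq_single 0 fun k hk => by simp [hk]]
  simp

lemma abs_le_of_abs_mul_pow_le {j : ℕ} (ha : ∀ k, |a k| * ((k : ℝ) + 1) ^ j ≤ M) (k : ℕ) :
    |a k| ≤ M :=
  (le_mul_of_one_le_right (abs_nonneg _)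
    (one_le_pow₀ (le_add_of_nonneg_left k.cast_nonneg))).trans (ha k)

lemma abs_derivCoeff_mul_pow_le {j : ℕ} (ha : ∀ k, |a k| * ((k : ℝ) + 1) ^ (j + 1) ≤ M)
    (k : ℕ) : |derivCoeff a k| * ((k : ℝ) + 1) ^ j ≤ M :=
  calc |derivCoeff a k| * ((k : ℝ) + 1) ^ j = |a (k + 1)| * ((k : ℝ) + 1) ^ (j + 1) := by
        rw [derivCoeff, abs_mul, abs_of_nonneg (by positivity)]; ring
    _ ≤ |a (k + 1)| * (((k + 1 : ℕ) : ℝ) + 1) ^ (j + 1) := by gcongr; linarith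
    _ ≤ M := ha (k + 1)

lemma summable_abs_of_abs_mul_sq_le (ha : ∀ k, |a k| * ((k : ℝ) + 1) ^ 2 ≤ M) :
    Summable fun k => |a k| := by
  have hsq : Summable fun k : ℕ => M / ((k : ℝ) + 1) ^ 2 :=
    ((summable_nat_add_iff 1).mpr (Real.summable_one_div_nat_pow.mpr one_lt_two)).mul_left M
      |>.congr fun k => by push_cast; ring
  exact hsq.of_nonneg_of_le (fun k => abs_nonneg _)
    fun k => (le_div_iff₀ (by positivity)).mpr (ha k)

lemma summable_mul_pow_of_abs_le (ha : ∀ k, |a k| ≤ M) (hx : |x| < 1) :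
    Summable fun k => a k * x ^ k := by
  refine .of_norm_bounded ((summable_geometric_of_lt_one (abs_nonneg x) hx).mul_left M)
    fun k => ?_
  rw [norm_mul, norm_pow, Real.norm_eq_abs, Real.norm_eq_abs]
  exact mul_le_mul_of_nonneg_right (ha k) (by positivity)

lemma hasDerivAt_powSeries (ha : ∀ k, |a k| ≤ M) (hx : |x| < 1) :
    HasDerivAt (powSeries a) (powSeries (derivCoeff a) x) x := by
  obtain ⟨r, hxr, hr1⟩ := exists_between hx
  have hr : ‖r‖ < 1 := by rwa [Real.norm_of_nonneg ((abs_nonneg x).trans hxr.le)]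
  have hM : 0 ≤ M := (abs_nonneg _).trans (ha 0)
  have hu : Summable fun k : ℕ => M * ((k + 1) * r ^ k) :=
    (((hasSum_coe_mul_geometric_of_norm_lt_one hr).summable.add
      (summable_geometric_of_norm_lt_one hr)).congr fun k => by ring).mul_left M
  have hshift : ∀ y ∈ Metric.ball (0 : ℝ) r,
      powSeries a y = a 0 + ∑' k, a (k + 1) * y ^ (k + 1) := fun y hy => by
    have hy1 : |y| < 1 := (mem_ball_zero_iff.mp hy).trans hr1
    rw [powSeries, (summable_mul_pow_of_abs_le ha hy1).tsum_eq_zero_add]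
    simp
  have hderiv : HasDerivAt (fun y => ∑' k, a (k + 1) * y ^ (k + 1))
      (∑' k, derivCoeff a k * x ^ k) x := by
    refine hasDerivAt_tsum_of_isPreconnected (t := Metric.ball (0 : ℝ) r)
      (g := fun k y => a (k + 1) * y ^ (k + 1)) (g' := fun k y => derivCoeff a k * y ^ k) hu
      Metric.isOpen_ball (convex_ball (0 : ℝ) r).isPreconnected (fun k y _ => ?_)
      (fun k y hy => ?_) (mem_ball_zero_iff.mpr hxr)
      ((summable_nat_add_iff 1).mpr (summable_mul_pow_of_abs_le ha hx))
      (mem_ball_zero_iff.mpr hxr)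
    · refine ((hasDerivAt_pow (k + 1) y).const_mul (a (k + 1))).congr_deriv ?_
      simp only [derivCoeff, Nat.add_sub_cancel, Nat.cast_add_one]
      ring
    · have hy : |y| ≤ r := (mem_ball_zero_iff.mp hy).le
      rw [norm_mul, norm_pow, Real.norm_eq_abs, Real.norm_eq_abs, derivCoeff, abs_mul,
        abs_of_nonneg (by positivity : (0 : ℝ) ≤ k + 1)]
      calc (k + 1) * |a (k + 1)| * |y| ^ k ≤ (k + 1) * M * r ^ k := by gcongr; exact ha _
        _ = M * ((k + 1) * r ^ k) := by ring
  exact (hderiv.const_add (a 0)).congr_of_eventuallyEq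
    (eventually_of_mem (Metric.isOpen_ball.mem_nhds (mem_ball_zero_iff.mpr hxr)) hshift)

lemma HasSum.natCast_mul_pow {s : ℝ} (h : HasSum (fun k => derivCoeff a k * x ^ k) s) :
    HasSum (fun k : ℕ => (k : ℝ) * a k * x ^ k) (x * s) := by
  rw [← hasSum_nat_add_iff' 1]
  simpa [derivCoeff, pow_succ, mul_comm, mul_left_comm, mul_assoc] using h.mul_left x

lemma continuousOn_powSeries (ha : Summable fun k => |a k|) :
    ContinuousOn (powSeries a) (Icc (-1) 1) := by
  refine continuousOn_tsum (fun k => (continuous_const.mul (continuous_pow k)).continuousOn) ha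
    fun k y hy => ?_
  rw [norm_mul, norm_pow, Real.norm_eq_abs, Real.norm_eq_abs]
  exact mul_le_of_le_one_right (abs_nonneg _) (pow_le_one₀ (abs_nonneg y) (abs_le.mpr hy))

end PowSeries

lemma exists_forall_le_of_eventually_succ_le {u : ℕ → ℝ}
    (h : ∀ᶠ k in atTop, u (k + 1) ≤ u k) : ∃ M, ∀ k, u k ≤ M := by
  obtain ⟨K, hK⟩ := eventually_atTop.mp h
  refine ⟨∑ i ∈ Finset.range (K + 1), |u i|, fun k => ?_⟩
  have hle : ∀ i ≤ K, u i ≤ ∑ i ∈ Finset.range (K + 1), |u i| := fun i hi =>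
    (le_abs_self _).trans <| Finset.single_le_sum (fun j _ => abs_nonneg (u j))
      (Finset.mem_range.mpr (Nat.lt_succ_of_le hi))
  rcases le_total k K with hk | hk
  · exact hle k hk
  · have : u k ≤ u K := by
      induction k, hk using Nat.le_induction with
      | base => exact le_rfl
      | succ m hm ih => exact (hK m hm).trans ih
    exact this.trans (hle K le_rfl)

lemma eventually_cubic_nonneg {d α β γ : ℝ} (hd : 0 < d) :
    ∀ᶠ t in atTop, 0 ≤ d * t ^ 3 + α * t ^ 2 + β * t + γ := by
  open Polynomial in
  have hP := tendsto_atTop_of_leadingCoeff_nonneg (C d * X ^ 3 + C α * X ^ 2 + C β * X + C γ)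
    (by rw [degree_cubic hd.ne']; norm_num) (by rw [leadingCoeff_cubic hd.ne']; exact hd.le)
  filter_upwards [hP.eventually_ge_atTop 0] with t ht
  simpa using ht

lemma pos_of_deriv_pos_at_first_zero {g g' : ℝ → ℝ} {b : ℝ}
    (hg : ∀ x ∈ Ico 0 b, HasDerivAt g (g' x) x) (h0 : 0 < g 0)
    (hzero : ∀ x ∈ Ioo 0 b, g x = 0 → (∀ y ∈ Ico 0 x, 0 < g y) → 0 < g' x) :
    ∀ x ∈ Ico 0 b, 0 < g x := by
  by_contra! ⟨x₁, hx₁, hgx₁⟩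
  have hcont : ContinuousOn g (Icc 0 x₁) := fun y hy =>
    (hg y ⟨hy.1, hy.2.trans_lt hx₁.2⟩).continuousAt.continuousWithinAt
  set Z := Icc 0 x₁ ∩ g ⁻¹' Iic 0
  have hZbdd : BddBelow Z := ⟨0, fun z hz => hz.1.1⟩
  obtain ⟨⟨hx₀0, hx₀x₁⟩, hgx₀⟩ : sInf Z ∈ Z :=
    (hcont.preimage_isClosed_of_isClosed isClosed_Icc isClosed_Iic).csInf_mem
      ⟨x₁, ⟨hx₁.1, le_rfl⟩, hgx₁⟩ hZbdd
  set x₀ := sInf Z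
  have hbelow : ∀ y ∈ Ico 0 x₀, 0 < g y := fun y hy => by
    by_contra! hgy
    exact hy.2.not_ge (csInf_le hZbdd ⟨⟨hy.1, hy.2.le.trans hx₀x₁⟩, hgy⟩)
  have hx₀pos : 0 < x₀ :=
    hx₀0.lt_of_ne fun h => by rw [← h] at hgx₀; exact hgx₀.not_gt h0
  have hleft : Ioo 0 x₀ ∈ 𝓝[<] x₀ := Ioo_mem_nhdsLT hx₀pos
  have hD := hg x₀ ⟨hx₀0, hx₀x₁.trans_lt hx₁.2⟩
  have hgx₀_eq : g x₀ = 0 := hgx₀.antisymm <|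
    ge_of_tendsto (hD.continuousAt.tendsto.mono_left nhdsWithin_le_nhds)
      (eventually_of_mem hleft fun y hy => (hbelow y ⟨hy.1.le, hy.2⟩).le)
  have hslope := (hasDerivAt_iff_tendsto_slope.mp hD).mono_left (nhdsLT_le_nhdsNE x₀)
  obtain ⟨y, hy, hslope_pos⟩ := ((eventually_of_mem hleft fun y hy => hy).and
    (hslope.eventually (eventually_gt_nhds
      (hzero x₀ ⟨hx₀pos, hx₀x₁.trans_lt hx₁.2⟩ hgx₀_eq hbelow)))).exists
  exact (neg_of_slope_pos hy.2 hslope_pos hgx₀_eq).not_gt (hbelow y ⟨hy.1.le, hy.2⟩)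

lemma monotoneOn_of_ode {F₀ F₁ F₂ p : ℝ → ℝ} {κ : ℝ} (hκ : 0 < κ)
    (hD₀ : ∀ x ∈ Ico 0 1, HasDerivAt F₀ (F₁ x) x)
    (hD₁ : ∀ x ∈ Ico 0 1, HasDerivAt F₁ (F₂ x) x)
    (hcont : ContinuousOn F₀ (Icc 0 1)) (hF₀ : 0 < F₀ 0) (hF₁ : 0 < F₁ 0)
    (hode : ∀ x ∈ Ioo 0 1, x * (1 - x) * F₂ x + p x * F₁ x = κ * F₀ x) :
    MonotoneOn F₀ (Icc 0 1) := by
  have hmono : ∀ t ≤ 1, ContinuousOn F₀ (Icc 0 t) → (∀ x ∈ Ioo 0 t, 0 ≤ F₁ x) →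
      MonotoneOn F₀ (Icc 0 t) := fun t ht hcont hF₁ => by
    refine monotoneOn_of_hasDerivWithinAt_nonneg (convex_Icc 0 t) hcont ?_
      (by rwa [interior_Icc])
    rw [interior_Icc]
    exact fun x hx => (hD₀ x ⟨hx.1.le, hx.2.trans_le ht⟩).hasDerivWithinAt
  have hF₁pos : ∀ x ∈ Ico 0 1, 0 < F₁ x := by
    refine pos_of_deriv_pos_at_first_zero hD₁ hF₁ fun x hx hF₁x hF₁pos => ?_
    have hF₀x : F₀ 0 ≤ F₀ x :=
      hmono x hx.2.le
        (fun y hy => (hD₀ y ⟨hy.1, hy.2.trans_lt hx.2⟩).continuousAt.continuousWithinAt)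
        (fun y hy => (hF₁pos y ⟨hy.1.le, hy.2⟩).le) (left_mem_Icc.mpr hx.1.le)
        (right_mem_Icc.mpr hx.1.le) hx.1.le
    have hode_x := hode x hx
    rw [hF₁x, mul_zero, add_zero] at hode_x
    exact pos_of_mul_pos_right (hode_x ▸ mul_pos hκ (hF₀.trans_le hF₀x))
      (mul_pos hx.1 (sub_pos.mpr hx.2)).le
  exact hmono 1 le_rfl hcont fun x hx => (hF₁pos x ⟨hx.1.le, hx.2⟩).le

noncomputable def hypCoeff (a b c : ℝ) (k : ℕ) : ℝ :=
  (ascPochhammer ℝ k).eval a * (ascPochhammer ℝ k).eval b /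
    ((k.factorial : ℝ) * (ascPochhammer ℝ k).eval c)

section Hypergeometric

variable {a b c : ℝ}

lemma hyp_eq_powSeries : hyp a b c = powSeries (hypCoeff a b c) := rfl

lemma hypCoeff_zero : hypCoeff a b c 0 = 1 := by simp [hypCoeff]

lemma hypCoeff_succ_mul (hc : 0 < c) (k : ℕ) :
    hypCoeff a b c (k + 1) * ((k + 1) * (k + c)) =
      hypCoeff a b c k * ((k + a) * (k + b)) := by
  have := (ascPochhammer_pos k c hc).ne'
  have : (k : ℝ) + c ≠ 0 := by positivity
  simp only [hypCoeff, ascPochhammer_succ_eval, Nat.factorial_succ]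
  push_cast
  field_simp
  ring

-- The difference of the two sides is a cubic in `t` with leading coefficient `c - a - b - 1`.
lemma eventually_abs_mul_mul_sq_le (habc : a + b + 1 < c) :
    ∀ᶠ t : ℝ in atTop, |(t + a) * (t + b)| * (t + 2) ^ 2 ≤ (t + 1) ^ 3 * (t + c) := by
  filter_upwards [eventually_cubic_nonneg (α := 3 * c - 1 - 4 * (a + b) - a * b)
      (β := 3 * c + 1 - 4 * (a + b) - 4 * (a * b)) (γ := c - 4 * (a * b)) (sub_pos.mpr habc),
    eventually_ge_atTop (-a), eventually_ge_atTop (-b)] with t ht hta htb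
  rw [abs_of_nonneg (mul_nonneg (by linarith) (by linarith))]
  linear_combination ht

lemma exists_abs_hypCoeff_mul_sq_le (hc : 0 < c) (habc : a + b + 1 < c) :
    ∃ M, ∀ k : ℕ, |hypCoeff a b c k| * ((k : ℝ) + 1) ^ 2 ≤ M := by
  refine exists_forall_le_of_eventually_succ_le ?_
  filter_upwards [tendsto_natCast_atTop_atTop.eventually (eventually_abs_mul_mul_sq_le habc)]
    with k hk
  have hpos : (0 : ℝ) < (k + 1) * (k + c) := by positivity
  have hrec := congrArg abs (hypCoeff_succ_mul (a := a) (b := b) hc k)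
  rw [abs_mul, abs_of_pos hpos, abs_mul] at hrec
  refine le_of_mul_le_mul_right ?_ hpos
  push_cast
  calc |hypCoeff a b c (k + 1)| * ((k : ℝ) + 1 + 1) ^ 2 * ((k + 1) * (k + c))
      = |hypCoeff a b c k| * (|(k + a) * (k + b)| * (k + 2) ^ 2) := by
        rw [mul_right_comm, hrec]; ring
    _ ≤ |hypCoeff a b c k| * ((k + 1) ^ 3 * (k + c)) := by gcongr
    _ = |hypCoeff a b c k| * ((k : ℝ) + 1) ^ 2 * ((k + 1) * (k + c)) := by ring

lemma hypergeometric_ode {u : ℕ → ℝ} {x F₀ F₁ F₂ : ℝ}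
    (hrec : ∀ k : ℕ, u (k + 1) * ((k + 1) * (k + c)) = u k * ((k + a) * (k + b)))
    (h₀ : HasSum (fun k => u k * x ^ k) F₀)
    (h₁ : HasSum (fun k => derivCoeff u k * x ^ k) F₁)
    (h₂ : HasSum (fun k => derivCoeff (derivCoeff u) k * x ^ k) F₂) :
    x * (1 - x) * F₂ + (c - (a + b + 1) * x) * F₁ = a * b * F₀ := by
  have hx₁ := h₁.natCast_mul_pow
  have hx₂ := h₂.natCast_mul_pow
  have hxx₂ : HasSum (fun k => derivCoeff (fun k : ℕ => ((k : ℝ) - 1) * u k) k * x ^ k)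
      (x * F₂) :=
    hx₂.congr_fun fun k => by simp only [derivCoeff]; push_cast; ring
  have hsum := (hx₂.add (h₁.mul_left c)).sub
    ((hxx₂.natCast_mul_pow.add (hx₁.mul_left (a + b + 1))).add (h₀.mul_left (a * b)))
  have hzero : ∀ k : ℕ, (k : ℝ) * derivCoeff u k * x ^ k + c * (derivCoeff u k * x ^ k) -
      ((k : ℝ) * ((k - 1) * u k) * x ^ k + (a + b + 1) * ((k : ℝ) * u k * x ^ k) +
        a * b * (u k * x ^ k)) = 0 := fun k => by
    simp only [derivCoeff]; linear_combination x ^ k * hrec k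
  rw [funext hzero] at hsum
  linear_combination -(hasSum_zero.unique hsum)

theorem monotoneOn_hyp (hc : 0 < c) (hab : 0 < a * b) (habc : a + b + 1 < c) :
    MonotoneOn (hyp a b c) (Icc 0 1) := by
  set u := hypCoeff a b c
  obtain ⟨M, hM₀⟩ := exists_abs_hypCoeff_mul_sq_le hc habc
  have hM₁ : ∀ k, |derivCoeff u k| * ((k : ℝ) + 1) ^ 1 ≤ M :=
    abs_derivCoeff_mul_pow_le hM₀
  have hM₂ : ∀ k, |derivCoeff (derivCoeff u) k| * ((k : ℝ) + 1) ^ 0 ≤ M :=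
    abs_derivCoeff_mul_pow_le hM₁
  have hdisk : ∀ x ∈ Ico (0 : ℝ) 1, |x| < 1 := fun x hx =>
    abs_lt.mpr ⟨by linarith [hx.1], hx.2⟩
  have hode : ∀ x ∈ Ioo (0 : ℝ) 1, x * (1 - x) * powSeries (derivCoeff (derivCoeff u)) x +
      (c - (a + b + 1) * x) * powSeries (derivCoeff u) x = a * b * powSeries u x := fun x hx =>
    have hx := hdisk x (Ioo_subset_Ico_self hx)
    hypergeometric_ode (hypCoeff_succ_mul hc)
      (summable_mul_pow_of_abs_le (abs_le_of_abs_mul_pow_le hM₀) hx).hasSum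
      (summable_mul_pow_of_abs_le (abs_le_of_abs_mul_pow_le hM₁) hx).hasSum
      (summable_mul_pow_of_abs_le (abs_le_of_abs_mul_pow_le hM₂) hx).hasSum
  have hu₁ : derivCoeff u 0 = a * b / c := by
    have h := hypCoeff_succ_mul (a := a) (b := b) hc 0
    simp only [Nat.cast_zero, zero_add, one_mul, hypCoeff_zero] at h
    rw [derivCoeff, Nat.cast_zero, zero_add, one_mul, eq_div_iff hc.ne', h]
  rw [hyp_eq_powSeries]
  exact monotoneOn_of_ode hab
    (fun x hx => hasDerivAt_powSeries (abs_le_of_abs_mul_pow_le hM₀) (hdisk x hx))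
    (fun x hx => hasDerivAt_powSeries (abs_le_of_abs_mul_pow_le hM₁) (hdisk x hx))
    ((continuousOn_powSeries (summable_abs_of_abs_mul_sq_le hM₀)).mono
      (Icc_subset_Icc (by norm_num) le_rfl))
    (by rw [powSeries_zero, hypCoeff_zero]; exact one_pos)
    (by rw [powSeries_zero, hu₁]; positivity) hode

end Hypergeometric

theorem hyp_monotone_general (n : ℕ) (hn : 2 ≤ n) (q : ℝ) (hq : 1 < q) :
    MonotoneOn (fun ρ : ℝ =>
        hyp (-(((n : ℝ) - 1) * (q - 1))) ((n : ℝ) / 2 + q - n * q) ((n : ℝ) / 2) ρ)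
      (Set.Icc (0:ℝ) 1) ∧
    ∀ ρ ∈ Set.Icc (0:ℝ) 1,
      hyp (-(((n : ℝ) - 1) * (q - 1))) ((n : ℝ) / 2 + q - n * q) ((n : ℝ) / 2) ρ ≤
        hyp (-(((n : ℝ) - 1) * (q - 1))) ((n : ℝ) / 2 + q - n * q) ((n : ℝ) / 2) 1 := by
  have hn' : (2 : ℝ) ≤ n := by exact_mod_cast hn
  have ha : -(((n : ℝ) - 1) * (q - 1)) < 0 := by nlinarith
  have hb : (n : ℝ) / 2 + q - n * q < 0 := by nlinarith
  have hmono := monotoneOn_hyp (c := (n : ℝ) / 2) (by positivity) (mul_pos_of_neg_of_neg ha hb)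
    (by nlinarith)
  exact ⟨hmono, fun ρ hρ => hmono hρ (right_mem_Icc.mpr zero_le_one) hρ.2⟩

theorem hyp_monotone (n : ℕ) (hn : 2 ≤ n) (q : ℝ) (hq : 1 < q) (hq' : q < 1 + 1 / ((n : ℝ) - 1)) :
    MonotoneOn (fun ρ : ℝ =>
        hyp (-(((n : ℝ) - 1) * (q - 1))) ((n : ℝ) / 2 + q - n * q) ((n : ℝ) / 2) ρ)
      (Set.Icc (0:ℝ) 1) ∧
    ∀ ρ ∈ Set.Icc (0:ℝ) 1,
      hyp (-(((n : ℝ) - 1) * (q - 1))) ((n : ℝ) / 2 + q - n * q) ((n : ℝ) / 2) ρ ≤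
        hyp (-(((n : ℝ) - 1) * (q - 1))) ((n : ℝ) / 2 + q - n * q) ((n : ℝ) / 2) 1 :=
  hyp_monotone_general n hn q hq
end

section
/- Let n ≥ 2, β ≥ 0, and define g(ρ) = ∫₀^π (1 + ρ² − 2ρ cos θ)^{β} sin^{n−2}θ dθ for ρ ∈ [0,1]. Then g is nondecreasing on [0,1]. -/
/-!
Up to a constant, `g(ρ)` is the mean of `x ↦ |x - η|^{2β}` over `η ∈ S^{n-1}` at `|x| = ρ`, a
radial function on the unit ball that is subharmonic since `Δ|x|^{2β} = 2β(2β+n-2)|x|^{2β-2} ≥ 0`.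
In the radial variable: `g' = 2β D` with `D(ρ) = ∫ (ρ - cos θ) u^{β-1} sin^{n-2} θ dθ`,
`u = 1 + ρ² - 2ρ cos θ`, and `(ρ^{n-1} D)' = (2β+n-2) ρ^{n-1} ∫ u^{β-1} sin^{n-2} θ dθ ≥ 0`,
where the angular part of the Laplacian is disposed of by integrating
`d/dθ (sin^{n-1} θ · u^{β-1})` over `[0, π]`. Since `ρ^{n-1} D` vanishes at `ρ = 0`, we get
`D ≥ 0` on `[0, 1)`.
-/

open Real Set MeasureTheory

theorem hasDerivAt_intervalIntegral_of_continuousOn {F F' : ℝ → ℝ → ℝ} {U : Set ℝ}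
    (hU : IsOpen U) {x₀ : ℝ} (hx₀ : x₀ ∈ U) (a b : ℝ) (hF : ∀ x ∈ U, Continuous (F x))
    (hF' : ContinuousOn (fun p : ℝ × ℝ => F' p.1 p.2) (U ×ˢ univ))
    (hderiv : ∀ x ∈ U, ∀ t, HasDerivAt (F · t) (F' x t) x) :
    HasDerivAt (fun x => ∫ t in a..b, F x t) (∫ t in a..b, F' x₀ t) x₀ := by
  obtain ⟨δ, hδ, hδU⟩ := Metric.nhds_basis_closedBall.mem_iff.1 (hU.mem_nhds hx₀)
  obtain ⟨C, hC⟩ := ((isCompact_closedBall x₀ δ).prod isCompact_uIcc).exists_bound_of_continuousOn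
    (hF'.mono (prod_mono hδU (subset_univ (uIcc a b))))
  have hball : Metric.closedBall x₀ δ ∈ nhds x₀ := Metric.closedBall_mem_nhds x₀ hδ
  refine (intervalIntegral.hasDerivAt_integral_of_dominated_loc_of_deriv_le (bound := fun _ => C)
    hball ?_ ((hF x₀ hx₀).intervalIntegrable a b) ?_ ?_ intervalIntegrable_const ?_).2
  · filter_upwards [hball] with x hx using (hF x (hδU hx)).aestronglyMeasurable
  · exact ((hF'.comp_continuous (Continuous.prodMk_right x₀)
      fun t => ⟨hx₀, mem_univ t⟩).aestronglyMeasurable)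
  · exact Filter.Eventually.of_forall fun t ht x hx => hC (x, t) ⟨hx, uIoc_subset_uIcc ht⟩
  · exact Filter.Eventually.of_forall fun t _ x hx => hderiv x (hδU hx) t

namespace CosIntegral

noncomputable def sqDist (ρ θ : ℝ) : ℝ := 1 + ρ ^ 2 - 2 * ρ * cos θ

lemma sqDist_eq (ρ θ : ℝ) : sqDist ρ θ = (ρ - cos θ) ^ 2 + sin θ ^ 2 := by
  rw [sqDist]
  linear_combination -sin_sq_add_cos_sq θ

lemma sqDist_nonneg (ρ θ : ℝ) : 0 ≤ sqDist ρ θ := by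
  rw [sqDist_eq]
  positivity

lemma sqDist_pos {ρ : ℝ} (hρ : ρ ∈ Ioo (-1) 1) (θ : ℝ) : 0 < sqDist ρ θ := by
  obtain ⟨h₁, h₂⟩ := hρ
  have := cos_le_one θ
  have := neg_one_le_cos θ
  rw [sqDist]
  rcases le_total 0 ρ with h | h <;> nlinarith

lemma continuous_sqDist : Continuous fun p : ℝ × ℝ => sqDist p.1 p.2 := by
  unfold sqDist
  fun_prop

lemma continuousOn_sqDist_rpow (γ : ℝ) :
    ContinuousOn (fun p : ℝ × ℝ => sqDist p.1 p.2 ^ γ) (Ioo (-1) 1 ×ˢ univ) :=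
  continuous_sqDist.continuousOn.rpow_const fun p hp => Or.inl (sqDist_pos hp.1 p.2).ne'

lemma continuous_sqDist_rpow {ρ : ℝ} (hρ : ρ ∈ Ioo (-1) 1) (γ : ℝ) :
    Continuous fun θ => sqDist ρ θ ^ γ :=
  (continuous_sqDist.comp (Continuous.prodMk_right ρ)).rpow_const
    fun θ => Or.inl (sqDist_pos hρ θ).ne'

lemma hasDerivAt_sqDist_rpow_left {ρ θ : ℝ} (h : sqDist ρ θ ≠ 0) (γ : ℝ) :
    HasDerivAt (sqDist · θ ^ γ) (2 * γ * (ρ - cos θ) * sqDist ρ θ ^ (γ - 1)) ρ := by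
  have hu : HasDerivAt (sqDist · θ) (2 * (ρ - cos θ)) ρ :=
    (((hasDerivAt_pow 2 ρ).const_add 1).sub
      (((hasDerivAt_id' ρ).const_mul 2).mul_const (cos θ))).congr_deriv (by ring)
  exact (hu.rpow_const (p := γ) (Or.inl h)).congr_deriv (by ring)

lemma hasDerivAt_sqDist_rpow_right {ρ θ : ℝ} (h : sqDist ρ θ ≠ 0) (γ : ℝ) :
    HasDerivAt (sqDist ρ · ^ γ) (2 * γ * ρ * sin θ * sqDist ρ θ ^ (γ - 1)) θ := by
  have hu : HasDerivAt (sqDist ρ ·) (2 * ρ * sin θ) θ :=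
    (((hasDerivAt_cos θ).const_mul (2 * ρ)).const_sub (1 + ρ ^ 2)).congr_deriv (by ring)
  exact (hu.rpow_const (p := γ) (Or.inl h)).congr_deriv (by ring)

noncomputable def meanPow (k : ℕ) (γ ρ : ℝ) : ℝ :=
  ∫ θ in (0:ℝ)..π, sqDist ρ θ ^ γ * sin θ ^ k

noncomputable def flux (k : ℕ) (γ ρ : ℝ) : ℝ :=
  ∫ θ in (0:ℝ)..π, (ρ - cos θ) * sqDist ρ θ ^ γ * sin θ ^ k

variable (k : ℕ) (γ : ℝ) {ρ : ℝ}

lemma hasDerivAt_meanPow (hρ : ρ ∈ Ioo (-1) 1) :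
    HasDerivAt (meanPow k γ) (2 * γ * flux k (γ - 1) ρ) ρ := by
  have hcont := continuousOn_sqDist_rpow (γ - 1)
  have := hasDerivAt_intervalIntegral_of_continuousOn isOpen_Ioo hρ 0 π
    (F := fun x θ => sqDist x θ ^ γ * sin θ ^ k)
    (F' := fun x θ => 2 * γ * ((x - cos θ) * sqDist x θ ^ (γ - 1) * sin θ ^ k))
    (fun x hx => (continuous_sqDist_rpow hx γ).mul (by fun_prop)) (by fun_prop)
    fun x hx θ =>
      ((hasDerivAt_sqDist_rpow_left (sqDist_pos hx θ).ne' γ).mul_const _).congr_deriv (by ring)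
  rwa [intervalIntegral.integral_const_mul] at this

lemma hasDerivAt_flux (hρ : ρ ∈ Ioo (-1) 1) :
    HasDerivAt (flux k γ)
      (∫ θ in (0:ℝ)..π,
        (sqDist ρ θ ^ γ + 2 * γ * (ρ - cos θ) ^ 2 * sqDist ρ θ ^ (γ - 1)) * sin θ ^ k) ρ := by
  have hcont := continuousOn_sqDist_rpow γ
  have hcont' := continuousOn_sqDist_rpow (γ - 1)
  refine hasDerivAt_intervalIntegral_of_continuousOn isOpen_Ioo hρ 0 π
    (F := fun x θ => (x - cos θ) * sqDist x θ ^ γ * sin θ ^ k)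
    (F' := fun x θ =>
      (sqDist x θ ^ γ + 2 * γ * (x - cos θ) ^ 2 * sqDist x θ ^ (γ - 1)) * sin θ ^ k)
    (fun x hx => ((continuous_const.sub continuous_cos).mul (continuous_sqDist_rpow hx γ)).mul
      (by fun_prop)) (by fun_prop) fun x hx θ => ?_
  exact ((((hasDerivAt_id' x).sub_const (cos θ)).mul
    (hasDerivAt_sqDist_rpow_left (sqDist_pos hx θ).ne' γ)).mul_const _).congr_deriv (by ring)

lemma integral_deriv_sin_pow_succ_mul_sqDist_rpow (hρ : ρ ∈ Ioo (-1) 1) :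
    ∫ θ in (0:ℝ)..π, ((k + 1) * cos θ * sqDist ρ θ ^ γ * sin θ ^ k
      + 2 * γ * ρ * sqDist ρ θ ^ (γ - 1) * sin θ ^ (k + 2)) = 0 := by
  have hc := continuous_sqDist_rpow hρ γ
  have hc' := continuous_sqDist_rpow hρ (γ - 1)
  rw [intervalIntegral.integral_eq_sub_of_hasDerivAt
    (f := fun θ => sin θ ^ (k + 1) * sqDist ρ θ ^ γ) (fun θ _ => ?_)
    (Continuous.intervalIntegrable (by fun_prop) 0 π)]
  · simp
  · refine (((hasDerivAt_sin θ).pow (k + 1)).mul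
      (hasDerivAt_sqDist_rpow_right (sqDist_pos hρ θ).ne' γ)).congr_deriv ?_
    simp only [Pi.pow_apply]
    push_cast
    ring

lemma hasDerivAt_pow_succ_mul_flux (hρ : ρ ∈ Ioo (-1) 1) :
    HasDerivAt (fun x => x ^ (k + 1) * flux k γ x)
      ((2 * γ + k + 2) * ρ ^ (k + 1) * meanPow k γ ρ) ρ := by
  refine ((hasDerivAt_pow (k + 1) ρ).mul (hasDerivAt_flux k γ hρ)).congr_deriv ?_
  have hc := continuous_sqDist_rpow hρ γ
  have hc' := continuous_sqDist_rpow hρ (γ - 1)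
  have hint {f : ℝ → ℝ} (hf : Continuous f) : IntervalIntegrable f volume 0 π :=
    hf.intervalIntegrable 0 π
  -- add `ρ ^ k` times the vanishing integral of `integral_deriv_sin_pow_succ_mul_sqDist_rpow`
  calc _ = ∫ θ in (0:ℝ)..π,
        ((k + 1) * ρ ^ k * ((ρ - cos θ) * sqDist ρ θ ^ γ * sin θ ^ k)
        + ρ ^ (k + 1) *
          ((sqDist ρ θ ^ γ + 2 * γ * (ρ - cos θ) ^ 2 * sqDist ρ θ ^ (γ - 1)) * sin θ ^ k))
        + ρ ^ k * ((k + 1) * cos θ * sqDist ρ θ ^ γ * sin θ ^ k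
          + 2 * γ * ρ * sqDist ρ θ ^ (γ - 1) * sin θ ^ (k + 2)) := by
        rw [intervalIntegral.integral_add (hint (by fun_prop)) (hint (by fun_prop)),
          intervalIntegral.integral_add (hint (by fun_prop)) (hint (by fun_prop)),
          intervalIntegral.integral_const_mul, intervalIntegral.integral_const_mul,
          intervalIntegral.integral_const_mul,
          integral_deriv_sin_pow_succ_mul_sqDist_rpow k γ hρ, flux]
        push_cast
        ring
    _ = ∫ θ in (0:ℝ)..π, (2 * γ + k + 2) * ρ ^ (k + 1) * (sqDist ρ θ ^ γ * sin θ ^ k) := by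
        refine intervalIntegral.integral_congr fun θ _ => ?_
        have hsplit : sqDist ρ θ ^ γ = sqDist ρ θ ^ (γ - 1) * ((ρ - cos θ) ^ 2 + sin θ ^ 2) := by
          rw [← sqDist_eq, ← rpow_add_one (sqDist_pos hρ θ).ne', sub_add_cancel]
        rw [hsplit]
        ring
    _ = _ := intervalIntegral.integral_const_mul _ _

lemma meanPow_nonneg : 0 ≤ meanPow k γ ρ :=
  intervalIntegral.integral_nonneg pi_pos.le fun θ hθ =>
    mul_nonneg (rpow_nonneg (sqDist_nonneg ρ θ) γ)
      (pow_nonneg (sin_nonneg_of_nonneg_of_le_pi hθ.1 hθ.2) k)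

lemma flux_nonneg (hγ : 0 ≤ 2 * γ + k + 2) (hρ : ρ ∈ Ioo 0 1) : 0 ≤ flux k γ ρ := by
  have hIco : Ico (0:ℝ) 1 ⊆ Ioo (-1) 1 := Ico_subset_Ioo_left (by norm_num)
  have hmono : MonotoneOn (fun x => x ^ (k + 1) * flux k γ x) (Ico 0 1) := by
    refine monotoneOn_of_deriv_nonneg (convex_Ico 0 1)
      (fun x hx => (hasDerivAt_pow_succ_mul_flux k γ (hIco hx)).continuousAt.continuousWithinAt)
      (fun x hx => ?_) (fun x hx => ?_) <;> rw [interior_Ico] at hx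
    · exact (hasDerivAt_pow_succ_mul_flux k γ (hIco (Ioo_subset_Ico_self hx))).differentiableAt
        |>.differentiableWithinAt
    · rw [(hasDerivAt_pow_succ_mul_flux k γ (hIco (Ioo_subset_Ico_self hx))).deriv]
      exact mul_nonneg (mul_nonneg hγ (pow_nonneg hx.1.le _)) (meanPow_nonneg k γ)
  have hρ_flux : (0:ℝ) ^ (k + 1) * flux k γ 0 ≤ ρ ^ (k + 1) * flux k γ ρ :=
    hmono ⟨le_rfl, zero_lt_one⟩ (Ioo_subset_Ico_self hρ) hρ.1.le
  rw [zero_pow k.succ_ne_zero, zero_mul] at hρ_flux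
  exact (mul_nonneg_iff_of_pos_left (pow_pos hρ.1 _)).1 hρ_flux

lemma monotoneOn_meanPow (hγ : 0 ≤ γ) : MonotoneOn (meanPow k γ) (Icc 0 1) := by
  have hcont : Continuous fun p : ℝ × ℝ => sqDist p.1 p.2 ^ γ * sin p.2 ^ k :=
    ((continuous_rpow_const hγ).comp continuous_sqDist).mul (by fun_prop)
  have hIoo : Ioo (0:ℝ) 1 ⊆ Ioo (-1) 1 := Ioo_subset_Ioo_left (by norm_num)
  refine monotoneOn_of_deriv_nonneg (convex_Icc 0 1)
    (intervalIntegral.continuous_parametric_intervalIntegral_of_continuous' hcont 0 π).continuousOn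
    (fun x hx => ?_) (fun x hx => ?_) <;> rw [interior_Icc] at hx
  · exact (hasDerivAt_meanPow k γ (hIoo hx)).differentiableAt.differentiableWithinAt
  · rw [(hasDerivAt_meanPow k γ (hIoo hx)).deriv]
    exact mul_nonneg (by linarith) (flux_nonneg k (γ - 1) (by linarith) hx)

end CosIntegral

theorem cos_integral_monotone_general (n : ℕ) (β : ℝ) (hβ : 0 ≤ β) :
    MonotoneOn (fun ρ : ℝ =>
        ∫ θ in (0:ℝ)..π, (1 + ρ ^ 2 - 2 * ρ * Real.cos θ) ^ β * Real.sin θ ^ (n - 2))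
      (Set.Icc (0:ℝ) 1) :=
  CosIntegral.monotoneOn_meanPow (n - 2) β hβ

theorem cos_integral_monotone (n : ℕ) (hn : 2 ≤ n) (β : ℝ) (hβ : 0 ≤ β) :
    MonotoneOn (fun ρ : ℝ =>
        ∫ θ in (0:ℝ)..π, (1 + ρ ^ 2 - 2 * ρ * Real.cos θ) ^ β * Real.sin θ ^ (n - 2))
      (Set.Icc (0:ℝ) 1) :=
  cos_integral_monotone_general n β hβ
end
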